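/- arXiv:2411.12726 — 2 statements merged into one kernel-verified Lean document; each statement's English description precedes it below -/
import Mathlib

section
/- Let π = N(0, I_r) be the standard Gaussian measure on ℝʳ. Let Φ : ℝʳ → ℝ be measurable with 0 < Z := ∫ exp(−Φ(z)) dπ(z) < ∞, and let ρ be the probability measure on ℝʳ with density dρ/dπ = exp(−Φ)/Z. Let S : ℝʳ → ℝʳ be a C¹ diffeomorphism with det ∇S(z) > 0 for all z, and assume z ↦ Φ(S(z)), z ↦ ‖S(z)‖², and z ↦ log det ∇S(z) are π-integrable. Then the Kullback–Leibler divergence of the pushforward S#π from ρ is finite and KL(S#π ‖ ρ) = ∫ [ Φ(S(z)) + ½‖S(z)‖² − log det ∇S(z) ] dπ(z) + log Z − r/2. -/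
/-! With `p z = (2π)^(-r/2) exp(-½ z ⬝ z)` the Lebesgue density of `π`, the change-of-variables
formula gives `S#π` the density `p(S⁻¹ y) / det ∇S(S⁻¹ y)`, while `ρ` has density `p e^(-Φ) / Z`.
Along `y = S z` the log-ratio of the two densities is therefore
`Φ(S z) + ½ ‖S z‖² - log det ∇S(z) - ½ ‖z‖² + log Z`; integrating against `π` and using
`∫ ‖z‖² dπ = r` gives the identity. -/

open MeasureTheory Matrix Real

noncomputable section

/-- Gaussian measure `N(m₀, C)` on `ℝⁿ`, defined via its Lebesgue density. -/
def gaussianOf {n : ℕ} (m₀ : Fin n → ℝ) (C : Matrix (Fin n) (Fin n) ℝ) :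
    Measure (Fin n → ℝ) :=
  volume.withDensity fun m =>
    ENNReal.ofReal (((2 * π) ^ n * C.det) ^ (-(1 : ℝ) / 2) *
      Real.exp (-(1 / 2) * ((m - m₀) ⬝ᵥ C⁻¹ *ᵥ (m - m₀))))

/-- Standard Gaussian `N(0, I_r)` on `ℝʳ`. -/
def stdGaussian (r : ℕ) : Measure (Fin r → ℝ) := gaussianOf 0 1

/-- Jacobian matrix of `f : ℝⁿ → ℝᵈ` at `x`. -/
def jac {n d : ℕ} (f : (Fin n → ℝ) → (Fin d → ℝ)) (x : Fin n → ℝ) :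
    Matrix (Fin d) (Fin n) ℝ :=
  Matrix.of fun i j => fderiv ℝ f x (Pi.single j 1) i

/-- Kullback–Leibler divergence `∫ log (dν₁/dν₂) dν₁` (real-valued). -/
def KLdiv {α : Type*} [MeasurableSpace α] (ν₁ ν₂ : Measure α) : ℝ :=
  ∫ x, Real.log ((ν₁.rnDeriv ν₂ x).toReal) ∂ν₁

open ProbabilityTheory hiding stdGaussian
open scoped ENNReal

def stdGaussianPDF (r : ℕ) (z : Fin r → ℝ) : ℝ :=
  (2 * π) ^ (-(r : ℝ) / 2) * exp (-(1 / 2) * (z ⬝ᵥ z))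

lemma stdGaussianPDF_pos {r : ℕ} (z : Fin r → ℝ) : 0 < stdGaussianPDF r z := by
  unfold stdGaussianPDF; positivity

lemma continuous_stdGaussianPDF (r : ℕ) : Continuous (stdGaussianPDF r) := by
  unfold stdGaussianPDF dotProduct; fun_prop

lemma log_stdGaussianPDF {r : ℕ} (z : Fin r → ℝ) :
    log (stdGaussianPDF r z) = -(r / 2) * log (2 * π) - (1 / 2) * (z ⬝ᵥ z) := by
  rw [stdGaussianPDF, log_mul (by positivity) (exp_pos _).ne', log_exp,
    log_rpow (by positivity)]
  ring

lemma stdGaussianPDF_eq_prod {r : ℕ} (z : Fin r → ℝ) :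
    stdGaussianPDF r z = ∏ i, gaussianPDFReal 0 1 (z i) := by
  simp only [stdGaussianPDF, gaussianPDFReal, Finset.prod_mul_distrib, ← exp_sum,
    Finset.prod_const, Finset.card_univ, Fintype.card_fin, dotProduct, Finset.mul_sum]
  congr 1
  · rw [NNReal.coe_one, mul_one, sqrt_eq_rpow, ← rpow_neg (by positivity), ← rpow_mul_natCast
      (by positivity)]
    ring_nf
  · congr 1; refine Finset.sum_congr rfl fun i _ => ?_; simp only [NNReal.coe_one]; ring

lemma stdGaussian_eq_withDensity (r : ℕ) :
    stdGaussian r = volume.withDensity fun z => ENNReal.ofReal (stdGaussianPDF r z) := by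
  simp only [stdGaussian, gaussianOf, det_one, mul_one, inv_one, one_mulVec, sub_zero,
    stdGaussianPDF]
  congr 2 with z
  rw [← rpow_natCast, ← rpow_mul (by positivity)]
  ring_nf

lemma integrable_stdGaussianPDF (r : ℕ) : Integrable (stdGaussianPDF r) := by
  simp_rw [funext stdGaussianPDF_eq_prod]
  exact Integrable.fintype_prod fun _ => integrable_gaussianPDFReal 0 1

theorem stdGaussian_eq_pi (r : ℕ) : stdGaussian r = Measure.pi fun _ => gaussianReal 0 1 := by
  refine (Measure.pi_eq fun s hs => ?_).symm
  rw [stdGaussian_eq_withDensity, withDensity_apply _ (MeasurableSet.univ_pi hs),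
    ← ofReal_integral_eq_lintegral_ofReal (integrable_stdGaussianPDF r).integrableOn
      (ae_of_all _ fun z => (stdGaussianPDF_pos z).le),
    volume_pi, Measure.restrict_pi_pi]
  simp_rw [stdGaussianPDF_eq_prod, integral_fintype_prod_eq_prod,
    gaussianReal_apply_eq_integral _ one_ne_zero]
  exact ENNReal.ofReal_prod_of_nonneg fun i _ =>
    integral_nonneg fun x => gaussianPDFReal_nonneg 0 1 x

instance (r : ℕ) : IsProbabilityMeasure (stdGaussian r) := by
  rw [stdGaussian_eq_pi]; infer_instance

lemma integral_sq_gaussianReal : ∫ x, x ^ 2 ∂gaussianReal 0 1 = 1 := by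
  have h := variance_fun_id_gaussianReal (μ := 0) (v := 1)
  rw [variance_eq_integral aemeasurable_id', integral_id_gaussianReal] at h
  simpa using h

lemma measurePreserving_eval_stdGaussian {r : ℕ} (i : Fin r) :
    MeasurePreserving (Function.eval i) (stdGaussian r) (gaussianReal 0 1) := by
  rw [stdGaussian_eq_pi]; exact measurePreserving_eval _ i

lemma integrable_sq_eval_stdGaussian {r : ℕ} (i : Fin r) :
    Integrable (fun z : Fin r → ℝ => z i ^ 2) (stdGaussian r) :=
  ((measurePreserving_eval_stdGaussian i).integrable_comp_of_integrable
    (memLp_id_gaussianReal 2).integrable_sq :)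

lemma integral_sq_eval_stdGaussian {r : ℕ} (i : Fin r) :
    ∫ z, z i ^ 2 ∂stdGaussian r = 1 := by
  rw [← integral_sq_gaussianReal, ← (measurePreserving_eval_stdGaussian i).map_eq,
    integral_map (measurable_pi_apply i).aemeasurable (by fun_prop)]

lemma dotProduct_self_eq_sum_sq {r : ℕ} (z : Fin r → ℝ) : z ⬝ᵥ z = ∑ i, z i ^ 2 := by
  simp only [dotProduct, sq]

lemma integrable_dotProduct_self_stdGaussian (r : ℕ) :
    Integrable (fun z : Fin r → ℝ => z ⬝ᵥ z) (stdGaussian r) := by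
  simp_rw [dotProduct_self_eq_sum_sq]
  exact integrable_finsetSum _ fun i _ => integrable_sq_eval_stdGaussian i

lemma integral_dotProduct_self_stdGaussian (r : ℕ) :
    ∫ z, z ⬝ᵥ z ∂stdGaussian r = r := by
  simp_rw [dotProduct_self_eq_sum_sq]
  rw [integral_finsetSum _ fun i _ => integrable_sq_eval_stdGaussian i]
  simp [integral_sq_eval_stdGaussian]

section withDensity

variable {α β : Type*} [MeasurableSpace α] [MeasurableSpace β]

lemma withDensity_ofReal_withDensity_ofReal (μ : Measure α) {f g : α → ℝ} (hf : Measurable f)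
    (hg : Measurable g) (hf_nonneg : ∀ x, 0 ≤ f x) :
    (μ.withDensity fun x => ENNReal.ofReal (f x)).withDensity (fun x => ENNReal.ofReal (g x)) =
      μ.withDensity fun x => ENNReal.ofReal (f x * g x) := by
  rw [← withDensity_mul μ hf.ennreal_ofReal hg.ennreal_ofReal]
  congr with x
  exact (ENNReal.ofReal_mul (hf_nonneg x)).symm

lemma rnDeriv_withDensity_ofReal_ae_eq (μ : Measure α) [SigmaFinite μ] {f g : α → ℝ}
    (hf : Measurable f) (hg : Measurable g) (hg_pos : ∀ x, 0 < g x) :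
    (μ.withDensity fun x => ENNReal.ofReal (f x)).rnDeriv
        (μ.withDensity fun x => ENNReal.ofReal (g x)) =ᵐ[μ]
      fun x => ENNReal.ofReal (f x / g x) := by
  set ν := μ.withDensity fun x => ENNReal.ofReal (g x)
  have : SigmaFinite ν :=
    SigmaFinite.withDensity_of_ne_top (ae_of_all _ fun _ => ENNReal.ofReal_ne_top)
  have hμν : μ ≪ ν := withDensity_absolutelyContinuous' hg.ennreal_ofReal.aemeasurable
    (ae_of_all _ fun x => (ENNReal.ofReal_pos.2 (hg_pos x)).ne')
  have hfactor : ν.withDensity (fun x => ENNReal.ofReal (f x / g x)) =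
      μ.withDensity fun x => ENNReal.ofReal (f x) := by
    refine (withDensity_ofReal_withDensity_ofReal μ hg (hf.div hg)
      fun x => (hg_pos x).le).trans ?_
    simp_rw [Pi.div_apply, mul_div_cancel₀ _ (hg_pos _).ne']
  rw [← hfactor]
  exact hμν.ae_le (Measure.rnDeriv_withDensity ν (hf.div hg).ennreal_ofReal)

lemma map_withDensity_comp (μ : Measure α) {f : α → β} (hf : Measurable f) {k : β → ℝ≥0∞}
    (hk : Measurable k) : (μ.withDensity (k ∘ f)).map f = (μ.map f).withDensity k := by
  ext s hs
  rw [Measure.map_apply hf hs, withDensity_apply _ (hf hs), withDensity_apply _ hs,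
    setLIntegral_map hs hk hf]
  rfl

end withDensity

section ChangeOfVariables

variable {E : Type*} [NormedAddCommGroup E] [NormedSpace ℝ E] [FiniteDimensional ℝ E]
  [MeasurableSpace E] [BorelSpace E] (μ : Measure E) [μ.IsAddHaarMeasure]

lemma measurable_det_fderiv (S : E → E) : Measurable fun x => (fderiv ℝ S x).det :=
  ContinuousLinearMap.continuous_det.measurable.comp (measurable_fderiv ℝ S)

theorem map_withDensity_ofReal_eq_of_det_fderiv_pos {S T : E → E} (hS : Differentiable ℝ S)
    (hTS : Function.LeftInverse T S) (hST : Function.RightInverse T S) (hT : Measurable T)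
    (hdet : ∀ x, 0 < (fderiv ℝ S x).det) {p : E → ℝ} (hp : Measurable p) :
    (μ.withDensity fun x => ENNReal.ofReal (p x)).map S =
      μ.withDensity fun y => ENNReal.ofReal (p (T y) / (fderiv ℝ S (T y)).det) := by
  set J : E → ℝ := fun x => (fderiv ℝ S x).det
  have hJ : Measurable J := measurable_det_fderiv S
  have hmapJ : (μ.withDensity fun x => ENNReal.ofReal (J x)).map S = μ := by
    have h := map_withDensity_abs_det_fderiv_eq_addHaar μ nullMeasurableSet_univ
      (fun x _ => (hS x).hasFDerivAt.hasFDerivWithinAt) hTS.injective.injOn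
    simpa only [Measure.restrict_univ, Set.image_univ, hST.surjective.range_eq,
      abs_of_pos (hdet _)] using h
  have hp_eq : (fun x => ENNReal.ofReal (p x)) =
      (fun x => ENNReal.ofReal (J x)) * ((fun y => ENNReal.ofReal (p (T y) / J (T y))) ∘ S) := by
    ext x
    rw [Pi.mul_apply, Function.comp_apply, hTS x, ← ENNReal.ofReal_mul (hdet x).le,
      mul_div_cancel₀ _ (hdet x).ne']
  have hk : Measurable fun y => ENNReal.ofReal (p (T y) / J (T y)) :=
    ((hp.comp hT).div (hJ.comp hT)).ennreal_ofReal
  rw [hp_eq, withDensity_mul μ hJ.ennreal_ofReal (hk.comp hS.continuous.measurable),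
    map_withDensity_comp _ hS.continuous.measurable hk, hmapJ]

theorem rnDeriv_map_withDensity_ofReal_apply_ae_eq {S T : E → E} (hS : Differentiable ℝ S)
    (hTS : Function.LeftInverse T S) (hST : Function.RightInverse T S) (hT : Measurable T)
    (hdet : ∀ x, 0 < (fderiv ℝ S x).det) {p q : E → ℝ} (hp : Measurable p) (hq : Measurable q)
    (hq_pos : ∀ x, 0 < q x) :
    ∀ᵐ x ∂(μ.withDensity fun x => ENNReal.ofReal (p x)),
      ((μ.withDensity fun x => ENNReal.ofReal (p x)).map S).rnDeriv
          (μ.withDensity fun x => ENNReal.ofReal (q x)) (S x) =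
        ENNReal.ofReal (p x / (fderiv ℝ S x).det / q (S x)) := by
  have h := rnDeriv_withDensity_ofReal_ae_eq μ (f := fun y => p (T y) / (fderiv ℝ S (T y)).det)
    ((hp.comp hT).div ((measurable_det_fderiv S).comp hT)) hq hq_pos
  have hmap := map_withDensity_ofReal_eq_of_det_fderiv_pos μ hS hTS hST hT hdet hp
  have hac : (μ.withDensity fun x => ENNReal.ofReal (p x)).map S ≪ μ :=
    hmap ▸ withDensity_absolutelyContinuous _ _
  rw [← hmap] at h
  filter_upwards [ae_of_ae_map hS.continuous.aemeasurable (hac.ae_le h)] with x hx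
  rwa [hTS x] at hx

end ChangeOfVariables

lemma det_jac {n : ℕ} (f : (Fin n → ℝ) → (Fin n → ℝ)) (x : Fin n → ℝ) :
    (jac f x).det = (fderiv ℝ f x).det := by
  rw [ContinuousLinearMap.det, ← LinearMap.det_toMatrix']
  rfl

lemma log_rnDeriv_map_stdGaussian_apply_ae_eq {r : ℕ} {Φ : (Fin r → ℝ) → ℝ} (hΦ : Measurable Φ)
    {Z : ℝ} (hZ : 0 < Z) {S Sinv : (Fin r → ℝ) → (Fin r → ℝ)} (hS : Differentiable ℝ S)
    (hli : Function.LeftInverse Sinv S) (hri : Function.RightInverse Sinv S)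
    (hSinv : Measurable Sinv) (hdet : ∀ z, 0 < (jac S z).det) :
    (fun z => log ((((stdGaussian r).map S).rnDeriv
        ((stdGaussian r).withDensity fun y => ENNReal.ofReal (exp (-Φ y) / Z)) (S z)).toReal))
      =ᵐ[stdGaussian r] fun z => Φ (S z) + 1 / 2 * (S z ⬝ᵥ S z) - log (jac S z).det
        - 1 / 2 * (z ⬝ᵥ z) + log Z := by
  have hπ := stdGaussian_eq_withDensity r
  have hp := (continuous_stdGaussianPDF r).measurable
  have hq : Measurable fun y => exp (-Φ y) / Z := hΦ.neg.exp.div_const Z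
  have hq_pos : ∀ y, 0 < stdGaussianPDF r y * (exp (-Φ y) / Z) :=
    fun y => mul_pos (stdGaussianPDF_pos y) (div_pos (exp_pos _) hZ)
  have hdet' : ∀ z, 0 < (fderiv ℝ S z).det := fun z => det_jac S z ▸ hdet z
  have hρ : (stdGaussian r).withDensity (fun y => ENNReal.ofReal (exp (-Φ y) / Z)) =
      volume.withDensity fun y => ENNReal.ofReal (stdGaussianPDF r y * (exp (-Φ y) / Z)) := by
    rw [hπ, withDensity_ofReal_withDensity_ofReal _ hp hq fun y => (stdGaussianPDF_pos y).le]
  have hratio := rnDeriv_map_withDensity_ofReal_apply_ae_eq volume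
    (q := fun y => stdGaussianPDF r y * (exp (-Φ y) / Z)) hS hli hri hSinv hdet' hp (hp.mul hq)
    hq_pos
  rw [← hπ, ← hρ] at hratio
  filter_upwards [hratio] with z hz
  have hpz := stdGaussianPDF_pos z
  have hpSz := stdGaussianPDF_pos (S z)
  rw [hz, ENNReal.toReal_ofReal (div_pos (div_pos hpz (hdet' z)) (hq_pos (S z))).le,
    log_div (div_pos hpz (hdet' z)).ne' (hq_pos (S z)).ne', log_div hpz.ne' (hdet' z).ne',
    log_mul hpSz.ne' (div_pos (exp_pos _) hZ).ne', log_div (exp_pos _).ne' hZ.ne', log_exp,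
    log_stdGaussianPDF, log_stdGaussianPDF, det_jac]
  ring

theorem latent_TMVI_objective_identity_general
    {r : ℕ} (Φ : (Fin r → ℝ) → ℝ) (hΦ : Measurable Φ)
    (hZpos : 0 < ∫ z, Real.exp (-(Φ z)) ∂(stdGaussian r))
    (S Sinv : (Fin r → ℝ) → (Fin r → ℝ))
    (hS : ContDiff ℝ 1 S)
    (hli : Function.LeftInverse Sinv S) (hri : Function.RightInverse Sinv S)
    (hdet : ∀ z, 0 < (jac S z).det)
    (hΦint : Integrable (fun z => Φ (S z)) (stdGaussian r))
    (hSint : Integrable (fun z => S z ⬝ᵥ S z) (stdGaussian r))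
    (hdetint : Integrable (fun z => Real.log (jac S z).det) (stdGaussian r)) :
    Integrable (fun z =>
        Real.log ((((stdGaussian r).map S).rnDeriv
          ((stdGaussian r).withDensity fun z' =>
            ENNReal.ofReal (Real.exp (-(Φ z')) / ∫ z'', Real.exp (-(Φ z'')) ∂(stdGaussian r)))
          z).toReal)) ((stdGaussian r).map S) ∧
      KLdiv ((stdGaussian r).map S)
          ((stdGaussian r).withDensity fun z' =>
            ENNReal.ofReal (Real.exp (-(Φ z')) / ∫ z'', Real.exp (-(Φ z'')) ∂(stdGaussian r))) =
        (∫ z, (Φ (S z) + (1 / 2) * (S z ⬝ᵥ S z) - Real.log (jac S z).det)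
            ∂(stdGaussian r)) +
          Real.log (∫ z, Real.exp (-(Φ z)) ∂(stdGaussian r)) - (r : ℝ) / 2 := by
  set Z := ∫ z, exp (-(Φ z)) ∂stdGaussian r
  -- Lusin–Souslin: a continuous injection of `ℝʳ` maps Borel sets to Borel sets.
  have hS_emb : MeasurableEmbedding S := hS.continuous.measurableEmbedding hli.injective
  have hSinv : Measurable Sinv := fun s hs => by
    rw [← Set.image_eq_preimage_of_inverse hli hri]
    exact hS_emb.measurableSet_image' hs
  have hlog := log_rnDeriv_map_stdGaussian_apply_ae_eq hΦ hZpos (hS.differentiable one_ne_zero)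
    hli hri hSinv hdet
  have hF : Integrable (fun z => Φ (S z) + 1 / 2 * (S z ⬝ᵥ S z) - log (jac S z).det)
      (stdGaussian r) := (hΦint.add (hSint.const_mul _)).sub hdetint
  have hz2 := (integrable_dotProduct_self_stdGaussian r).const_mul (1 / 2)
  have hG : Integrable (fun z => Φ (S z) + 1 / 2 * (S z ⬝ᵥ S z) - log (jac S z).det
      - 1 / 2 * (z ⬝ᵥ z)) (stdGaussian r) := hF.sub hz2
  refine ⟨hS_emb.integrable_map_iff.2 ((hG.add (integrable_const _)).congr hlog.symm), ?_⟩
  rw [KLdiv, hS_emb.integral_map, integral_congr_ae hlog, integral_add hG (integrable_const _),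
    integral_sub hF hz2, integral_const_mul, integral_dotProduct_self_stdGaussian, integral_const]
  simp only [probReal_univ, smul_eq_mul, one_mul]
  ring

/-- latent-space TMVI objective identity.
For `π = N(0, I_r)`, target `dρ/dπ = exp(−Φ)/Z`, and a `C¹` diffeomorphism `S`
with positive Jacobian determinant, `KL(S#π ‖ ρ)` is finite and equals
`∫ [Φ(S z) + ½‖S z‖² − log det ∇S(z)] dπ(z) + log Z − r/2`. -/
theorem latent_TMVI_objective_identity
    {r : ℕ} (Φ : (Fin r → ℝ) → ℝ) (hΦ : Measurable Φ)
    (hZpos : 0 < ∫ z, Real.exp (-(Φ z)) ∂(stdGaussian r))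
    (S Sinv : (Fin r → ℝ) → (Fin r → ℝ))
    (hS : ContDiff ℝ 1 S) (hSinv : ContDiff ℝ 1 Sinv)
    (hli : Function.LeftInverse Sinv S) (hri : Function.RightInverse Sinv S)
    (hdet : ∀ z, 0 < (jac S z).det)
    (hΦint : Integrable (fun z => Φ (S z)) (stdGaussian r))
    (hSint : Integrable (fun z => S z ⬝ᵥ S z) (stdGaussian r))
    (hdetint : Integrable (fun z => Real.log (jac S z).det) (stdGaussian r)) :
    Integrable (fun z =>
        Real.log ((((stdGaussian r).map S).rnDeriv
          ((stdGaussian r).withDensity fun z' =>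
            ENNReal.ofReal (Real.exp (-(Φ z')) / ∫ z'', Real.exp (-(Φ z'')) ∂(stdGaussian r)))
          z).toReal)) ((stdGaussian r).map S) ∧
      KLdiv ((stdGaussian r).map S)
          ((stdGaussian r).withDensity fun z' =>
            ENNReal.ofReal (Real.exp (-(Φ z')) / ∫ z'', Real.exp (-(Φ z'')) ∂(stdGaussian r))) =
        (∫ z, (Φ (S z) + (1 / 2) * (S z ⬝ᵥ S z) - Real.log (jac S z).det)
            ∂(stdGaussian r)) +
          Real.log (∫ z, Real.exp (-(Φ z)) ∂(stdGaussian r)) - (r : ℝ) / 2 :=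
  latent_TMVI_objective_identity_general Φ hΦ hZpos S Sinv hS hli hri hdet hΦint hSint hdetint
end
end

section
/- Consider the Gaussian prior, projection, and data-space whitening setting. Let G : ℝⁿ → ℝ^d and g : ℝʳ → ℝ^d be Borel measurable. Then ∫ ‖Γ^{-1/2} ( G(m) − V g(Em) )‖² dμ(m) = ∫_{ℝʳ} ∫ ‖ Vᵀ Γ⁻¹ G(Ψz + m⊥) − g(z) ‖² dμ⊥(m⊥) dπ(z), where both sides may be infinite. -/
open MeasureTheory Matrix Real

noncomputable section

/-- The potential (negative log-likelihood) `Φʸ(m) = ½ (G(m)−y)ᵀΓ⁻¹(G(m)−y)`. -/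
def potential {n d : ℕ} (Γ : Matrix (Fin d) (Fin d) ℝ)
    (G : (Fin n → ℝ) → (Fin d → ℝ)) (y : Fin d → ℝ) (m : Fin n → ℝ) : ℝ :=
  (1 / 2) * ((G m - y) ⬝ᵥ Γ⁻¹ *ᵥ (G m - y))

/-- The normalization constant `Zʸ = ∫ exp(−Φʸ) dμ`. -/
def Znorm {n d : ℕ} (C : Matrix (Fin n) (Fin n) ℝ) (Γ : Matrix (Fin d) (Fin d) ℝ)
    (G : (Fin n → ℝ) → (Fin d → ℝ)) (y : Fin d → ℝ) : ℝ :=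
  ∫ m, Real.exp (-(potential Γ G y m)) ∂(gaussianOf 0 C)

/-- The Bayesian posterior `dμʸ/dμ = exp(−Φʸ)/Zʸ`. -/
def posterior {n d : ℕ} (C : Matrix (Fin n) (Fin n) ℝ) (Γ : Matrix (Fin d) (Fin d) ℝ)
    (G : (Fin n → ℝ) → (Fin d → ℝ)) (y : Fin d → ℝ) : Measure (Fin n → ℝ) :=
  (gaussianOf 0 C).withDensity fun m =>
    ENNReal.ofReal (Real.exp (-(potential Γ G y m)) / Znorm C Γ G y)

/-- The complement prior `μ⊥`: pushforward of `μ = N(0,C)` under `m ↦ (I − P)m`,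
where `P = Ψ(ΨᵀC⁻¹)` is the projector onto the reduced subspace. -/
def compPrior {n r : ℕ} (C : Matrix (Fin n) (Fin n) ℝ) (Ψ : Matrix (Fin n) (Fin r) ℝ) :
    Measure (Fin n → ℝ) :=
  (gaussianOf 0 C).map fun m => m - (Ψ * (Ψᵀ * C⁻¹)) *ᵥ m

/-- The lazy map `T(m) = (I − P)m + Ψ S(Em)`, where `E = ΨᵀC⁻¹` and `P = ΨE`. -/
def lazyMap {n r : ℕ} (C : Matrix (Fin n) (Fin n) ℝ) (Ψ : Matrix (Fin n) (Fin r) ℝ)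
    (S : (Fin r → ℝ) → (Fin r → ℝ)) (m : Fin n → ℝ) : Fin n → ℝ :=
  (m - (Ψ * (Ψᵀ * C⁻¹)) *ᵥ m) + Ψ *ᵥ S ((Ψᵀ * C⁻¹) *ᵥ m)

open scoped ENNReal

/-!
Write `E = ΨᵀC⁻¹`. Since `ΨᵀC⁻¹Ψ = 1`, the `C⁻¹`-norm splits along `Ψ`, which gives the
density identity `φ(-Em) ρ(m + Ψ(z - Em)) = φ(z) ρ(m)` between the densities `ρ` of `μ` and
`φ` of `π`. Realising the substitution `m ↦ m + Ψ(z - Em)` by three translations of Lebesgue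
measure (interleaved with Tonelli) then shows that `m ↦ (Em, (I - P)m)` pushes `μ` forward to
`π ⊗ μ⊥`. Finally `VᵀΓ⁻¹V = 1` makes `VᵀΓ⁻¹` an isometry from the `Γ⁻¹`-norm to the Euclidean
norm, and `VᵀΓ⁻¹(G - V g) = VᵀΓ⁻¹G - g`.
-/

section Translation

variable {G H : Type*} [AddCommGroup G] [MeasurableSpace G] [MeasurableAdd₂ G]
  [AddCommGroup H] [MeasurableSpace H] [MeasurableAdd₂ H] [MeasurableNeg H]
  {μ : Measure G} {ν : Measure H} [SFinite μ] [SFinite ν]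
  [μ.IsAddRightInvariant] [ν.IsAddRightInvariant]

theorem lintegral_eq_lintegral_lintegral_add_section (E : G →+ H) (Ψ : H →+ G)
    (hE : Measurable E) (hΨ : Measurable Ψ) (hEΨ : ∀ z, E (Ψ z) = z)
    {φ : H → ℝ≥0∞} (hφ : Measurable φ) (hφ_one : ∫⁻ z, φ z ∂ν = 1)
    {h : G → ℝ≥0∞} (hh : Measurable h) :
    ∫⁻ m, h m ∂μ = ∫⁻ z, ∫⁻ m, φ (-E m) * h (m + Ψ (z - E m)) ∂μ ∂ν := by
  calc ∫⁻ m, h m ∂μ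
      = ∫⁻ m, ∫⁻ z, φ z * h m ∂ν ∂μ := by
        simp only [lintegral_mul_const _ hφ, hφ_one, one_mul]
    _ = ∫⁻ z, ∫⁻ m, φ z * h (m + Ψ z) ∂μ ∂ν := by
        rw [lintegral_lintegral_swap (by fun_prop)]
        exact lintegral_congr fun z => (lintegral_add_right_eq_self _ (Ψ z)).symm
    _ = ∫⁻ m, ∫⁻ z, φ (z - E m) * h (m + Ψ (z - E m)) ∂ν ∂μ := by
        rw [lintegral_lintegral_swap (by fun_prop)]
        refine lintegral_congr fun m => (lintegral_add_right_eq_self _ (-E m)).symm.trans ?_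
        simp only [sub_eq_add_neg]
    _ = ∫⁻ z, ∫⁻ m, φ (-E m) * h (m + Ψ (z - E m)) ∂μ ∂ν := by
        rw [lintegral_lintegral_swap (by fun_prop)]
        refine lintegral_congr fun z => (lintegral_add_right_eq_self _ (Ψ z)).symm.trans ?_
        have hshift : ∀ m, z - E (m + Ψ z) = -E m := fun m => by
          rw [map_add, hEΨ, sub_add_cancel_right]
        simp only [hshift]
        simp only [sub_eq_add_neg, map_add, map_neg, add_assoc]

end Translation

namespace Matrix

variable {k l : ℕ}

theorem dotProduct_mulVec_add_mulVec {A : Matrix (Fin k) (Fin k) ℝ} (hA : A.IsSymm)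
    {Ψ : Matrix (Fin k) (Fin l) ℝ} (hΨ : Ψᵀ * A * Ψ = 1) (m : Fin k → ℝ) (u : Fin l → ℝ) :
    (m + Ψ *ᵥ u) ⬝ᵥ A *ᵥ (m + Ψ *ᵥ u)
      = m ⬝ᵥ A *ᵥ m + 2 * ((Ψᵀ * A) *ᵥ m ⬝ᵥ u) + u ⬝ᵥ u := by
  have hcross : m ⬝ᵥ A *ᵥ (Ψ *ᵥ u) = (Ψᵀ * A) *ᵥ m ⬝ᵥ u := by
    rw [mulVec_mulVec, dotProduct_mulVec, ← mulVec_transpose, transpose_mul, hA.eq]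
  have hcross' : (Ψ *ᵥ u) ⬝ᵥ A *ᵥ m = (Ψᵀ * A) *ᵥ m ⬝ᵥ u := by
    rw [dotProduct_comm, ← hcross, dotProduct_mulVec m, ← mulVec_transpose, hA.eq]
  have hsquare : (Ψ *ᵥ u) ⬝ᵥ A *ᵥ (Ψ *ᵥ u) = u ⬝ᵥ u := by
    rw [mulVec_mulVec, dotProduct_mulVec, ← mulVec_transpose, mulVec_mulVec, transpose_mul,
      hA.eq, hΨ, one_mulVec]
  rw [mulVec_add, dotProduct_add, add_dotProduct, add_dotProduct, hcross, hcross', hsquare]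
  ring

theorem dotProduct_mulVec_sub_mulVec {A V : Matrix (Fin k) (Fin k) ℝ} (hV : Vᵀ * A * V = 1)
    (u w : Fin k → ℝ) :
    (u - V *ᵥ w) ⬝ᵥ A *ᵥ (u - V *ᵥ w) = ((Vᵀ * A) *ᵥ u - w) ⬝ᵥ ((Vᵀ * A) *ᵥ u - w) := by
  have hW : (Vᵀ * A) *ᵥ u - w = (Vᵀ * A) *ᵥ (u - V *ᵥ w) := by
    rw [mulVec_sub, mulVec_mulVec, hV, one_mulVec]
  have hVW : V * (Vᵀ * A) = 1 := mul_eq_one_comm.mp hV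
  rw [hW, dotProduct_mulVec _ (Vᵀ * A), ← mulVec_transpose, mulVec_mulVec, transpose_mul,
    transpose_transpose, Matrix.mul_assoc, hVW, Matrix.mul_one, dotProduct_mulVec,
    ← mulVec_transpose]

end Matrix

section Gaussian

open ProbabilityTheory (gaussianPDFReal gaussianPDFReal_def gaussianPDFReal_nonneg
  integrable_gaussianPDFReal integral_gaussianPDFReal_eq_one)

variable {n r : ℕ}

def gaussianDensity (C : Matrix (Fin n) (Fin n) ℝ) (m : Fin n → ℝ) : ℝ :=
  ((2 * π) ^ n * C.det) ^ (-(1 : ℝ) / 2) * Real.exp (-(1 / 2) * (m ⬝ᵥ C⁻¹ *ᵥ m))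

@[fun_prop]
theorem measurable_gaussianDensity (C : Matrix (Fin n) (Fin n) ℝ) :
    Measurable (gaussianDensity C) := by
  unfold gaussianDensity
  fun_prop

instance (m₀ : Fin n → ℝ) (C : Matrix (Fin n) (Fin n) ℝ) : SFinite (gaussianOf m₀ C) := by
  unfold gaussianOf
  infer_instance

instance (C : Matrix (Fin n) (Fin n) ℝ) (Ψ : Matrix (Fin n) (Fin r) ℝ) :
    SFinite (compPrior C Ψ) := by
  unfold compPrior
  infer_instance

theorem gaussianOf_zero (C : Matrix (Fin n) (Fin n) ℝ) :
    gaussianOf 0 C = volume.withDensity fun m => ENNReal.ofReal (gaussianDensity C m) := by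
  simp only [gaussianOf, gaussianDensity, sub_zero]

theorem gaussianDensity_one (z : Fin r → ℝ) :
    gaussianDensity 1 z = ∏ i, gaussianPDFReal 0 1 (z i) := by
  have h2π : 0 ≤ 2 * π := by positivity
  have hconst : ((2 * π) ^ r * (1 : Matrix (Fin r) (Fin r) ℝ).det) ^ (-(1 : ℝ) / 2)
      = (√(2 * π))⁻¹ ^ r := by
    rw [det_one, mul_one, Real.sqrt_eq_rpow, ← Real.rpow_neg h2π, ← Real.rpow_natCast,
      ← Real.rpow_mul h2π, ← Real.rpow_natCast, ← Real.rpow_mul h2π]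
    ring_nf
  have hexp : -(1 / 2) * (z ⬝ᵥ (1 : Matrix (Fin r) (Fin r) ℝ)⁻¹ *ᵥ z)
      = ∑ i, -(z i - 0) ^ 2 / (2 * (1 : NNReal)) := by
    simp only [inv_one, one_mulVec, dotProduct, Finset.mul_sum, NNReal.coe_one]
    exact Finset.sum_congr rfl fun i _ => by ring
  rw [gaussianDensity, hconst, hexp, Real.exp_sum, ← Fin.prod_const, ← Finset.prod_mul_distrib]
  simp only [gaussianPDFReal_def, NNReal.coe_one, mul_one]

theorem gaussianDensity_one_nonneg (z : Fin r → ℝ) : 0 ≤ gaussianDensity 1 z := by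
  rw [gaussianDensity_one]
  exact Finset.prod_nonneg fun i _ => gaussianPDFReal_nonneg 0 1 (z i)

theorem lintegral_gaussianDensity_one :
    ∫⁻ z : Fin r → ℝ, ENNReal.ofReal (gaussianDensity 1 z) = 1 := by
  have hprod : gaussianDensity 1 = fun z : Fin r → ℝ => ∏ i, gaussianPDFReal 0 1 (z i) :=
    funext gaussianDensity_one
  have hint : Integrable (gaussianDensity 1 : (Fin r → ℝ) → ℝ) := by
    rw [hprod, volume_pi]
    exact Integrable.fintype_prod fun _ => integrable_gaussianPDFReal 0 1
  rw [← ofReal_integral_eq_lintegral_ofReal hint (ae_of_all _ gaussianDensity_one_nonneg), hprod,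
    volume_pi, integral_fintype_prod_eq_pow, integral_gaussianPDFReal_eq_one 0 one_ne_zero,
    one_pow, ENNReal.ofReal_one]

variable {C : Matrix (Fin n) (Fin n) ℝ} {Ψ : Matrix (Fin n) (Fin r) ℝ}

theorem gaussianDensity_mul_gaussianDensity_add_mulVec (hC : C.IsSymm)
    (hΨ : Ψᵀ * C⁻¹ * Ψ = 1) (m : Fin n → ℝ) (z : Fin r → ℝ) :
    gaussianDensity 1 (-((Ψᵀ * C⁻¹) *ᵥ m)) * gaussianDensity C (m + Ψ *ᵥ (z - (Ψᵀ * C⁻¹) *ᵥ m))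
      = gaussianDensity 1 z * gaussianDensity C m := by
  set e := (Ψᵀ * C⁻¹) *ᵥ m
  have hexp : -(1 / 2) * (-e ⬝ᵥ (1 : Matrix (Fin r) (Fin r) ℝ)⁻¹ *ᵥ -e)
        + -(1 / 2) * ((m + Ψ *ᵥ (z - e)) ⬝ᵥ C⁻¹ *ᵥ (m + Ψ *ᵥ (z - e)))
      = -(1 / 2) * (z ⬝ᵥ (1 : Matrix (Fin r) (Fin r) ℝ)⁻¹ *ᵥ z)
        + -(1 / 2) * (m ⬝ᵥ C⁻¹ *ᵥ m) := by
    rw [dotProduct_mulVec_add_mulVec hC.inv hΨ]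
    simp only [inv_one, one_mulVec, neg_dotProduct, dotProduct_neg, dotProduct_sub,
      sub_dotProduct, dotProduct_comm z e]
    ring
  simp only [gaussianDensity]
  rw [mul_mul_mul_comm, ← Real.exp_add, hexp, Real.exp_add, mul_mul_mul_comm]

theorem lintegral_gaussianOf_eq_lintegral_stdGaussian_compPrior (hC : C.IsSymm)
    (hΨ : Ψᵀ * C⁻¹ * Ψ = 1) {f : (Fin r → ℝ) × (Fin n → ℝ) → ℝ≥0∞} (hf : Measurable f) :
    ∫⁻ m, f ((Ψᵀ * C⁻¹) *ᵥ m, m - (Ψ * (Ψᵀ * C⁻¹)) *ᵥ m) ∂gaussianOf 0 C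
      = ∫⁻ z, ∫⁻ p, f (z, p) ∂compPrior C Ψ ∂stdGaussian r := by
  set E := Ψᵀ * C⁻¹
  have hEΨ : ∀ z, E *ᵥ (Ψ *ᵥ z) = z := fun z => by rw [mulVec_mulVec, hΨ, one_mulVec]
  have hlatent : ∀ m z, E *ᵥ (m + Ψ *ᵥ (z - E *ᵥ m)) = z := fun m z => by
    rw [mulVec_add, hEΨ, add_sub_cancel]
  have hcomplement : ∀ m z, (m + Ψ *ᵥ (z - E *ᵥ m)) - (Ψ * E) *ᵥ (m + Ψ *ᵥ (z - E *ᵥ m))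
      = m - (Ψ * E) *ᵥ m := fun m z => by
    rw [← mulVec_mulVec _ Ψ E, hlatent, ← mulVec_mulVec _ Ψ E, mulVec_sub]
    abel
  rw [gaussianOf_zero, lintegral_withDensity_eq_lintegral_mul _ (by fun_prop) (by fun_prop),
    lintegral_eq_lintegral_lintegral_add_section (mulVecLin E).toAddMonoidHom
      (mulVecLin Ψ).toAddMonoidHom (show Measurable (E *ᵥ ·) by fun_prop)
      (show Measurable (Ψ *ᵥ ·) by fun_prop) hEΨ (by fun_prop)
      lintegral_gaussianDensity_one (by fun_prop)]
  simp only [LinearMap.toAddMonoidHom_coe, mulVecLin_apply, Pi.mul_apply, hlatent, hcomplement]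
  rw [stdGaussian, gaussianOf_zero,
    lintegral_withDensity_eq_lintegral_mul _ (by fun_prop) hf.lintegral_prod_right']
  refine lintegral_congr fun z => ?_
  rw [Pi.mul_apply, compPrior, lintegral_map (by fun_prop) (by fun_prop), gaussianOf_zero,
    lintegral_withDensity_eq_lintegral_mul _ (by fun_prop) (by fun_prop),
    ← lintegral_const_mul _ (by fun_prop)]
  refine lintegral_congr fun m => ?_
  rw [← mul_assoc, ← ENNReal.ofReal_mul (gaussianDensity_one_nonneg _),
    gaussianDensity_mul_gaussianDensity_add_mulVec hC hΨ,
    ENNReal.ofReal_mul (gaussianDensity_one_nonneg _), mul_assoc]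
  rfl

end Gaussian

theorem L2_learning_latent_representation_general
    {n r d : ℕ} (C : Matrix (Fin n) (Fin n) ℝ) (hC : C.PosDef)
    (Γ : Matrix (Fin d) (Fin d) ℝ)
    (Ψ : Matrix (Fin n) (Fin r) ℝ) (hΨ : Ψᵀ * C⁻¹ * Ψ = 1)
    (V : Matrix (Fin d) (Fin d) ℝ) (hV : Vᵀ * Γ⁻¹ * V = 1)
    (G : (Fin n → ℝ) → (Fin d → ℝ)) (hG : Measurable G)
    (g : (Fin r → ℝ) → (Fin d → ℝ)) (hg : Measurable g) :
    (∫⁻ m, ENNReal.ofReal ((G m - V *ᵥ g ((Ψᵀ * C⁻¹) *ᵥ m)) ⬝ᵥ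
        Γ⁻¹ *ᵥ (G m - V *ᵥ g ((Ψᵀ * C⁻¹) *ᵥ m))) ∂(gaussianOf 0 C)) =
      ∫⁻ z, ∫⁻ mp, ENNReal.ofReal
          (((Vᵀ * Γ⁻¹) *ᵥ G (Ψ *ᵥ z + mp) - g z) ⬝ᵥ
            ((Vᵀ * Γ⁻¹) *ᵥ G (Ψ *ᵥ z + mp) - g z))
        ∂(compPrior C Ψ) ∂(stdGaussian r) := by
  have hrecompose : ∀ m, Ψ *ᵥ ((Ψᵀ * C⁻¹) *ᵥ m) + (m - (Ψ * (Ψᵀ * C⁻¹)) *ᵥ m) = m := fun m => by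
    rw [mulVec_mulVec, add_sub_cancel]
  rw [← lintegral_gaussianOf_eq_lintegral_stdGaussian_compPrior
    (isHermitian_iff_isSymm.mp hC.isHermitian) hΨ (f := fun x => ENNReal.ofReal
      (((Vᵀ * Γ⁻¹) *ᵥ G (Ψ *ᵥ x.1 + x.2) - g x.1) ⬝ᵥ ((Vᵀ * Γ⁻¹) *ᵥ G (Ψ *ᵥ x.1 + x.2) - g x.1)))
    (by fun_prop)]
  refine lintegral_congr fun m => ?_
  rw [dotProduct_mulVec_sub_mulVec hV, hrecompose]

/-- equivalence of the `L²_μ` operator learning objective and its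
latent representation:
`∫ ‖Γ^{-1/2}(G(m) − V g(Em))‖² dμ(m)
  = ∫∫ ‖VᵀΓ⁻¹G(Ψz + m⊥) − g(z)‖² dμ⊥(m⊥) dπ(z)`, both sides possibly infinite. -/
theorem L2_learning_latent_representation
    {n r d : ℕ} (C : Matrix (Fin n) (Fin n) ℝ) (hC : C.PosDef)
    (Γ : Matrix (Fin d) (Fin d) ℝ) (hΓ : Γ.PosDef)
    (Ψ : Matrix (Fin n) (Fin r) ℝ) (hΨ : Ψᵀ * C⁻¹ * Ψ = 1)
    (V : Matrix (Fin d) (Fin d) ℝ) (hVinv : IsUnit V.det) (hV : Vᵀ * Γ⁻¹ * V = 1)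
    (G : (Fin n → ℝ) → (Fin d → ℝ)) (hG : Measurable G)
    (g : (Fin r → ℝ) → (Fin d → ℝ)) (hg : Measurable g) :
    (∫⁻ m, ENNReal.ofReal ((G m - V *ᵥ g ((Ψᵀ * C⁻¹) *ᵥ m)) ⬝ᵥ
        Γ⁻¹ *ᵥ (G m - V *ᵥ g ((Ψᵀ * C⁻¹) *ᵥ m))) ∂(gaussianOf 0 C)) =
      ∫⁻ z, ∫⁻ mp, ENNReal.ofReal
          (((Vᵀ * Γ⁻¹) *ᵥ G (Ψ *ᵥ z + mp) - g z) ⬝ᵥ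
            ((Vᵀ * Γ⁻¹) *ᵥ G (Ψ *ᵥ z + mp) - g z))
        ∂(compPrior C Ψ) ∂(stdGaussian r) :=
  L2_learning_latent_representation_general C hC Γ Ψ hΨ V hV G hG g hg
end
end
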